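/- arXiv:math/9706219 — 4 statements merged into one kernel-verified Lean document; each statement's English description precedes it below -/
import Mathlib

section
/- For any Ferrers board B with n columns of heights c_1 ≤ c_2 ≤ ... ≤ c_n ≤ n, the Garsia–Remmel factorization holds: Σ_{k=0}^n [x]_q [x-1]_q ⋯ [x-k+1]_q R_{n-k}(B;q) = Π_{i=1}^n [x + c_i - i + 1]_q, as an identity of polynomials in q^x (equivalently, valid for all nonnegative integers x). -/
open Finset
open scoped Classical

noncomputable section

variable {R : Type*} [CommRing R]

/-- The q-integer `[m]_q = 1 + q + ... + q^{m-1}`. -/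
def qint (q : R) (m : ℕ) : R := ∑ i ∈ Finset.range m, q ^ i

/-- The q-factorial `[m]_q!`. -/
def qfact (q : R) (m : ℕ) : R := ∏ i ∈ Finset.range m, qint q (i + 1)

/-- A Ferrers board inside the `n × n` grid, given by column heights `c`:
square `(i,j)` (0-based row `i`, column `j`) belongs to the board iff `i < c j`. -/
def IsFerrers (n : ℕ) (c : Fin n → ℕ) : Prop := Monotone c ∧ ∀ j, c j ≤ n

/-- The squares of the Ferrers board with column heights `c`. -/
def boardSq (n : ℕ) (c : Fin n → ℕ) : Finset (Fin n × Fin n) :=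
  Finset.univ.filter fun s => (s.1 : ℕ) < c s.2

/-- A set of rooks is non-attacking when no two share a row or a column. -/
def NonAttacking {n : ℕ} (C : Finset (Fin n × Fin n)) : Prop :=
  ∀ r ∈ C, ∀ r' ∈ C, r ≠ r' → r.1 ≠ r'.1 ∧ r.2 ≠ r'.2

/-- Placements of `k` non-attacking rooks on the Ferrers board. -/
def placements (n : ℕ) (c : Fin n → ℕ) (k : ℕ) : Finset (Finset (Fin n × Fin n)) :=
  Finset.univ.filter fun C => C.card = k ∧ C ⊆ boardSq n c ∧ NonAttacking C

/-- `inv(C,B)`: the number of squares of the board that do not contain a rook and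
are not above (smaller row index, same column) nor to the right of (same row,
larger column index) any rook of `C`. -/
def rookInv (n : ℕ) (c : Fin n → ℕ) (C : Finset (Fin n × Fin n)) : ℕ :=
  ((boardSq n c).filter fun s => s ∉ C ∧ ∀ r ∈ C,
    ¬(r.2 = s.2 ∧ s.1 < r.1) ∧ ¬(r.1 = s.1 ∧ r.2 < s.2)).card

/-- The Garsia–Remmel q-rook polynomial `R_k(B;q)`. -/
def qRook (q : R) (n : ℕ) (c : Fin n → ℕ) (k : ℕ) : R :=
  ∑ C ∈ placements n c k, q ^ rookInv n c C

/-- The polynomial (in `x`) `∑_{j=0}^n [j]_q! R_{n-j}(B;q) ∏_{i=j+1}^n (x - q^i)`. -/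
def hitGen (q : R) (n : ℕ) (c : Fin n → ℕ) : Polynomial R :=
  ∑ j ∈ Finset.range (n + 1),
    Polynomial.C (qfact q j * qRook q n c (n - j)) *
      ∏ i ∈ Finset.Icc (j + 1) n, (Polynomial.X - Polynomial.C (q ^ i))

/-- The Garsia–Remmel q-hit polynomial `T_k(B;q)`, defined by
`∑_{j=0}^n [j]_q! R_{n-j}(B;q) ∏_{i=j+1}^n (x - q^i) = ∑_k T_k(B;q) x^k`. -/
def qHit (q : R) (n : ℕ) (c : Fin n → ℕ) (k : ℕ) : R := (hitGen q n c).coeff k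

/-- Placements of `n` non-attacking rooks on the full `n × n` grid with exactly
`k` rooks on the board. -/
def fullPlacements (n : ℕ) (c : Fin n → ℕ) (k : ℕ) : Finset (Finset (Fin n × Fin n)) :=
  Finset.univ.filter fun C => C.card = n ∧ NonAttacking C ∧ (C ∩ boardSq n c).card = k

end

/-- `[m]_q = (1 - q^m)/(1 - q)` for an integer `m`. -/
noncomputable def qbrk (q : ℚ) (m : ℤ) : ℚ := (1 - q ^ m) / (1 - q)

/-! Delete the rightmost column `j` of the Ferrers board `B`, a tallest one, of height `c j`,
to get `B'`. A placement of `k + 1` rooks either avoids column `j`, and then the `c j - (k + 1)`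
squares of column `j` outside the rows of its rooks stay uncancelled, or it has one rook in column
`j`, in one of the `c j - k` free rows, and exactly the free squares below that rook stay
uncancelled; summing over the free rows gives `[c j - k]_q`. Hence
`R_{k+1}(B) = q^(c j - (k + 1)) R_{k+1}(B') + [c j - k]_q R_k(B')`, and the identity
`[a]_q q^b + [b]_q = [a + b]_q` turns the left-hand side for `B` into the one for `B'` times
`[x + c j - j]_q`. -/

section QAnalogue

theorem sum_pow_card_filter_lt {R α : Type*} [CommRing R] [LinearOrder α] (q : R)
    (T : Finset α) : ∑ r ∈ T, q ^ #{t ∈ T | r < t} = qint q #T := by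
  induction T using Finset.induction_on_min with
  | empty => simp [qint]
  | insert a T ha ih =>
    have haT : a ∉ T := fun h => lt_irrefl a (ha a h)
    have hfilter_a : {t ∈ insert a T | a < t} = T := by
      ext t
      simp only [mem_filter, mem_insert]
      exact ⟨fun ⟨h, hat⟩ => h.resolve_left hat.ne', fun h => ⟨Or.inr h, ha t h⟩⟩
    have hfilter : ∀ r ∈ T, {t ∈ insert a T | r < t} = {t ∈ T | r < t} := fun r hr => by
      rw [filter_insert, if_neg (ha r hr).not_gt]
    rw [sum_insert haT, hfilter_a, sum_congr rfl fun r hr => by rw [hfilter r hr], ih,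
      card_insert_of_notMem haT, qint, qint, sum_range_succ, add_comm]

theorem qint_eq_qbrk {q : ℚ} (hq1 : q ≠ 1) (m : ℕ) : qint q m = qbrk q m := by
  rw [qint, geom_sum_eq hq1, qbrk, zpow_natCast, ← neg_sub, ← neg_sub 1 q, neg_div_neg_eq]

theorem qbrk_mul_zpow_add_qbrk {q : ℚ} (hq0 : q ≠ 0) (a b : ℤ) :
    qbrk q a * q ^ b + qbrk q b = qbrk q (a + b) := by
  simp only [qbrk, zpow_add₀ hq0]
  ring

theorem pow_sub_mul_eq_zpow_sub_mul {K : Type*} [DivisionRing K] (q : K) {a b : ℕ} {y : K}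
    (hy : a < b → y = 0) : q ^ (a - b) * y = q ^ ((a : ℤ) - b) * y := by
  rcases le_or_gt b a with hab | hab
  · rw [← zpow_natCast, Nat.cast_sub hab]
  · simp [hy hab]

theorem qint_sub_mul_eq_qbrk_sub_mul {q : ℚ} (hq1 : q ≠ 1) {a b : ℕ} {y : ℚ}
    (hy : a < b → y = 0) : qint q (a - b) * y = qbrk q ((a : ℤ) - b) * y := by
  rcases le_or_gt b a with hab | hab
  · rw [qint_eq_qbrk hq1, Nat.cast_sub hab]
  · simp [hy hab]

noncomputable def qDescFactorial (q : ℚ) (x : ℤ) (k : ℕ) : ℚ := ∏ j ∈ range k, qbrk q (x - j)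

theorem qDescFactorial_succ (q : ℚ) (x : ℤ) (k : ℕ) :
    qDescFactorial q x (k + 1) = qDescFactorial q x k * qbrk q (x - k) :=
  prod_range_succ _ _

/-- `a` and `b` stand for the rook numbers of a board and of that board with its last column, of
height `h`, deleted. -/
theorem sum_antidiagonal_qDescFactorial_mul_of_recurrence {q : ℚ} (hq0 : q ≠ 0) (x h : ℤ)
    (N : ℕ) (a b : ℕ → ℚ) (hb : b (N + 1) = 0) (ha₀ : a 0 = q ^ h * b 0)
    (ha : ∀ m : ℕ, a (m + 1) = q ^ (h - (m + 1)) * b (m + 1) + qbrk q (h - m) * b m) :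
    ∑ p ∈ antidiagonal (N + 1), qDescFactorial q x p.1 * a p.2 =
      (∑ p ∈ antidiagonal N, qDescFactorial q x p.1 * b p.2) * qbrk q (x + h - N) := by
  set g : ℕ × ℕ → ℚ := fun p => qDescFactorial q x p.1 * q ^ (h - p.2) * b p.2
  have hsplit : ∑ p ∈ antidiagonal (N + 1), qDescFactorial q x p.1 * a p.2 =
      ∑ p ∈ antidiagonal (N + 1), g p +
        ∑ p ∈ antidiagonal N, qDescFactorial q x p.1 * qbrk q (h - p.2) * b p.2 := by
    rw [Nat.sum_antidiagonal_succ', Nat.sum_antidiagonal_succ' (f := g)]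
    simp only [g, ha₀, ha, mul_add, sum_add_distrib, Nat.cast_zero, sub_zero, Nat.cast_add,
      Nat.cast_one]
    ring_nf
  have hshift : ∑ p ∈ antidiagonal (N + 1), g p =
      ∑ p ∈ antidiagonal N, qDescFactorial q x (p.1 + 1) * q ^ (h - p.2) * b p.2 := by
    rw [Nat.sum_antidiagonal_succ]
    simp [g, hb]
  rw [hsplit, hshift, ← sum_add_distrib, sum_mul]
  refine sum_congr rfl fun p hp => ?_
  have hN : (p.1 : ℤ) + p.2 = N := by exact_mod_cast mem_antidiagonal.mp hp
  calc qDescFactorial q x (p.1 + 1) * q ^ (h - p.2) * b p.2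
        + qDescFactorial q x p.1 * qbrk q (h - p.2) * b p.2
      = qDescFactorial q x p.1 * (qbrk q (x - p.1) * q ^ (h - p.2) + qbrk q (h - p.2)) *
          b p.2 := by
        rw [qDescFactorial_succ]
        ring
    _ = qDescFactorial q x p.1 * b p.2 * qbrk q (x + h - N) := by
        rw [qbrk_mul_zpow_add_qbrk hq0, ← hN]
        ring_nf

end QAnalogue

section Placements

variable {n : ℕ}

theorem mem_boardSq {c : Fin n → ℕ} {s : Fin n × Fin n} :
    s ∈ boardSq n c ↔ (s.1 : ℕ) < c s.2 := by
  simp [boardSq]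

theorem mem_placements {c : Fin n → ℕ} {k : ℕ} {C : Finset (Fin n × Fin n)} :
    C ∈ placements n c k ↔ #C = k ∧ C ⊆ boardSq n c ∧ NonAttacking C := by
  simp only [placements, mem_filter, mem_univ, true_and]

theorem NonAttacking.mono {C D : Finset (Fin n × Fin n)} (hC : NonAttacking C) (hDC : D ⊆ C) :
    NonAttacking D :=
  fun r hr r' hr' hne => hC r (hDC hr) r' (hDC hr') hne

theorem NonAttacking.insert {C : Finset (Fin n × Fin n)} {s : Fin n × Fin n}
    (hC : NonAttacking C) (hs : ∀ r ∈ C, r.1 ≠ s.1 ∧ r.2 ≠ s.2) :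
    NonAttacking (insert s C) := by
  intro a ha b hb hab
  rw [mem_insert] at ha hb
  rcases ha with rfl | ha <;> rcases hb with rfl | hb
  · exact absurd rfl hab
  · exact ⟨(hs b hb).1.symm, (hs b hb).2.symm⟩
  · exact hs a ha
  · exact hC a ha b hb hab

theorem NonAttacking.injOn_fst {C : Finset (Fin n × Fin n)} (hC : NonAttacking C) :
    Set.InjOn Prod.fst (C : Set (Fin n × Fin n)) :=
  fun r hr r' hr' h => by_contra fun hne => (hC r hr r' hr' hne).1 h

theorem NonAttacking.injOn_snd {C : Finset (Fin n × Fin n)} (hC : NonAttacking C) :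
    Set.InjOn Prod.snd (C : Set (Fin n × Fin n)) :=
  fun r hr r' hr' h => by_contra fun hne => (hC r hr r' hr' hne).2 h

theorem image_fst_subset_of_forall_le {c : Fin n → ℕ} {h : ℕ} (hch : ∀ i, c i ≤ h)
    {C : Finset (Fin n × Fin n)} (hC : C ⊆ boardSq n c) :
    C.image Prod.fst ⊆ ({i | (i : ℕ) < h} : Finset (Fin n)) := by
  intro i hi
  obtain ⟨s, hs, rfl⟩ := mem_image.mp hi
  exact mem_filter.mpr ⟨mem_univ _, (mem_boardSq.mp (hC hs)).trans_le (hch s.2)⟩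

theorem le_of_mem_placements_of_forall_le {c : Fin n → ℕ} {h k : ℕ} (hch : ∀ i, c i ≤ h)
    {C : Finset (Fin n × Fin n)} (hC : C ∈ placements n c k) : k ≤ h := by
  obtain ⟨rfl, hCB, hna⟩ := mem_placements.mp hC
  calc #C = #(C.image Prod.fst) := (card_image_of_injOn hna.injOn_fst).symm
    _ ≤ #{i : Fin n | (i : ℕ) < h} := card_le_card (image_fst_subset_of_forall_le hch hCB)
    _ ≤ h := Fin.card_filter_val_lt.trans_le (min_le_right _ _)

theorem le_of_mem_placements_of_eq_zero_of_le {c : Fin n → ℕ} {m k : ℕ}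
    (hcm : ∀ i : Fin n, m ≤ i → c i = 0) {C : Finset (Fin n × Fin n)}
    (hC : C ∈ placements n c k) : k ≤ m := by
  obtain ⟨rfl, hCB, hna⟩ := mem_placements.mp hC
  have hcols : C.image Prod.snd ⊆ ({j | (j : ℕ) < m} : Finset (Fin n)) := by
    intro j hj
    obtain ⟨s, hs, rfl⟩ := mem_image.mp hj
    have hs' := mem_boardSq.mp (hCB hs)
    exact mem_filter.mpr ⟨mem_univ _, by_contra fun hm => by simp [hcm s.2 (not_lt.mp hm)] at hs'⟩
  calc #C = #(C.image Prod.snd) := (card_image_of_injOn hna.injOn_snd).symm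
    _ ≤ #{j : Fin n | (j : ℕ) < m} := card_le_card hcols
    _ ≤ m := Fin.card_filter_val_lt.trans_le (min_le_right _ _)

theorem placements_zero (c : Fin n → ℕ) : placements n c 0 = {∅} := by
  ext C
  simp only [mem_placements, card_eq_zero, mem_singleton, and_iff_left_iff_imp]
  rintro rfl
  exact ⟨empty_subset _, fun r hr => absurd hr (notMem_empty r)⟩

variable {R : Type*} [CommRing R] (q : R)

theorem qRook_eq_zero_of_forall_le {c : Fin n → ℕ} {h k : ℕ} (hch : ∀ i, c i ≤ h) (hk : h < k) :
    qRook q n c k = 0 :=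
  sum_eq_zero fun _ hC => absurd (le_of_mem_placements_of_forall_le hch hC) hk.not_ge

theorem qRook_eq_zero_of_eq_zero_of_le {c : Fin n → ℕ} {m k : ℕ}
    (hcm : ∀ i : Fin n, m ≤ i → c i = 0) (hk : m < k) : qRook q n c k = 0 :=
  sum_eq_zero fun _ hC => absurd (le_of_mem_placements_of_eq_zero_of_le hcm hC) hk.not_ge

theorem qRook_heights_zero : qRook q n (fun _ => 0) 0 = 1 := by
  simp [qRook, placements_zero, rookInv, boardSq]

end Placements

section Cancellation

variable {n : ℕ}

def RookCancels (r s : Fin n × Fin n) : Prop :=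
  r = s ∨ (r.2 = s.2 ∧ s.1 < r.1) ∨ (r.1 = s.1 ∧ r.2 < s.2)

theorem rookInv_eq_card_filter (c : Fin n → ℕ) (C : Finset (Fin n × Fin n)) :
    rookInv n c C = #{s ∈ boardSq n c | ∀ r ∈ C, ¬RookCancels r s} := by
  unfold rookInv
  congr 1
  ext s
  simp only [mem_filter, RookCancels, not_or, not_and]
  refine and_congr_right fun _ => ⟨fun ⟨hs, h⟩ r hr => ⟨fun hrs => hs (hrs ▸ hr), h r hr⟩,
    fun h => ⟨fun hs => (h s hs).1 rfl, fun r hr => (h r hr).2⟩⟩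

theorem rookCancels_mk_iff_of_lt {r : Fin n × Fin n} {i j : Fin n} (hr : r.2 < j) :
    RookCancels r (i, j) ↔ r.1 = i := by
  simp [RookCancels, Prod.ext_iff, hr.ne, hr]

theorem rookCancels_mk_mk_iff {r i j : Fin n} : RookCancels (r, j) (i, j) ↔ i ≤ r := by
  simp [RookCancels, le_iff_eq_or_lt, eq_comm]

theorem not_rookCancels_mk_of_lt {r j : Fin n} {s : Fin n × Fin n} (hs : s.2 < j) :
    ¬RookCancels (r, j) s := by
  simp [RookCancels, Prod.ext_iff, hs.ne', hs.not_gt]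

end Cancellation

section ColumnRemoval

variable {n : ℕ}

def freeRows (h : ℕ) (C : Finset (Fin n × Fin n)) : Finset (Fin n) :=
  ({i | (i : ℕ) < h} : Finset (Fin n)) \ C.image Prod.fst

theorem card_freeRows {c : Fin n → ℕ} {h k : ℕ} (hhn : h ≤ n) (hch : ∀ i, c i ≤ h)
    {C : Finset (Fin n × Fin n)} (hC : C ∈ placements n c k) : #(freeRows h C) = h - k := by
  obtain ⟨rfl, hCB, hna⟩ := mem_placements.mp hC
  rw [freeRows, card_sdiff_of_subset (image_fst_subset_of_forall_le hch hCB),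
    Fin.card_filter_val_lt, min_eq_right hhn, card_image_of_injOn hna.injOn_fst]

section

variable (c : Fin n → ℕ) (j : Fin n)

theorem boardSq_update_zero :
    boardSq n (Function.update c j 0) = {s ∈ boardSq n c | s.2 ≠ j} := by
  ext s
  by_cases hs : s.2 = j <;> simp [mem_boardSq, hs]

theorem placements_update_zero (k : ℕ) :
    placements n (Function.update c j 0) k = {C ∈ placements n c k | ∀ s ∈ C, s.2 ≠ j} := by
  ext C
  simp only [mem_filter, mem_placements, boardSq_update_zero]
  constructor
  · rintro ⟨hk, hCB, hna⟩
    exact ⟨⟨hk, fun s hs => (mem_filter.mp (hCB hs)).1, hna⟩,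
      fun s hs => (mem_filter.mp (hCB hs)).2⟩
  · rintro ⟨⟨hk, hCB, hna⟩, hj⟩
    exact ⟨hk, fun s hs => mem_filter.mpr ⟨hCB hs, hj s hs⟩, hna⟩

theorem card_filter_boardSq_snd_eq (p : Fin n × Fin n → Prop) :
    #{s ∈ boardSq n c | s.2 = j ∧ p s} = #{i : Fin n | (i : ℕ) < c j ∧ p (i, j)} := by
  refine card_nbij' Prod.fst (·, j) ?_ ?_ ?_ ?_
  · rintro ⟨i, _⟩ hs
    simp only [coe_filter, mem_boardSq, Set.mem_ofPred_eq] at hs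
    obtain ⟨hi, rfl, hp⟩ := hs
    simp [hi, hp]
  · intro i hi
    simp_all [mem_boardSq]
  · rintro ⟨i, _⟩ hs
    simp_all
  · intro i _
    rfl

theorem rookInv_eq_add (C : Finset (Fin n × Fin n)) :
    rookInv n c C = #{s ∈ boardSq n (Function.update c j 0) | ∀ r ∈ C, ¬RookCancels r s} +
      #{i : Fin n | (i : ℕ) < c j ∧ ∀ r ∈ C, ¬RookCancels r (i, j)} := by
  rw [rookInv_eq_card_filter, boardSq_update_zero, filter_filter,
    ← card_filter_add_card_filter_not (p := fun s => s.2 ≠ j), filter_filter]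
  congr 1
  · congr 1
    ext s
    simp only [mem_filter]
    tauto
  · convert card_filter_boardSq_snd_eq c j (fun s => ∀ r ∈ C, ¬RookCancels r s) using 2
    all_goals ext s; simp only [mem_filter, not_not]
    tauto

end

variable {c : Fin n → ℕ} {j : Fin n}

theorem update_zero_le (htall : ∀ i, c i ≤ c j) (i : Fin n) : Function.update c j 0 i ≤ c j := by
  rcases eq_or_ne i j with rfl | h
  · simp
  · simp [h, htall i]

theorem snd_lt_of_mem_boardSq_update_zero (hright : ∀ i, j < i → c i = 0)
    {s : Fin n × Fin n} (hs : s ∈ boardSq n (Function.update c j 0)) : s.2 < j := by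
  rw [boardSq_update_zero, mem_filter, mem_boardSq] at hs
  rcases lt_trichotomy s.2 j with h | h | h
  · exact h
  · exact absurd h hs.2
  · simp [hright _ h] at hs

theorem rookInv_of_mem_placements_update_zero (hright : ∀ i, j < i → c i = 0)
    (htall : ∀ i, c i ≤ c j) (hcj : c j ≤ n) {k : ℕ} {C : Finset (Fin n × Fin n)}
    (hC : C ∈ placements n (Function.update c j 0) k) :
    rookInv n c C = rookInv n (Function.update c j 0) C + (c j - k) := by
  have hcols : ∀ r ∈ C, r.2 < j := fun r hr =>
    snd_lt_of_mem_boardSq_update_zero hright ((mem_placements.mp hC).2.1 hr)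
  rw [rookInv_eq_add c j, rookInv_eq_card_filter, ← card_freeRows hcj (update_zero_le htall) hC]
  congr 2
  ext i
  simp only [freeRows, mem_filter, mem_sdiff, mem_univ, true_and, mem_image]
  refine and_congr_right fun _ => ⟨fun h ⟨r, hr, hri⟩ => h r hr ?_, fun h r hr hc => h ⟨r, hr, ?_⟩⟩
  · exact (rookCancels_mk_iff_of_lt (hcols r hr)).mpr hri
  · exact (rookCancels_mk_iff_of_lt (hcols r hr)).mp hc

theorem rookInv_insert (hright : ∀ i, j < i → c i = 0) {k : ℕ} {C : Finset (Fin n × Fin n)}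
    (hC : C ∈ placements n (Function.update c j 0) k) (r₀ : Fin n) :
    rookInv n c (insert (r₀, j) C) =
      rookInv n (Function.update c j 0) C + #{i ∈ freeRows (c j) C | r₀ < i} := by
  have hcols : ∀ r ∈ C, r.2 < j := fun r hr =>
    snd_lt_of_mem_boardSq_update_zero hright ((mem_placements.mp hC).2.1 hr)
  rw [rookInv_eq_add c j, rookInv_eq_card_filter]
  congr 1
  · refine congrArg card (filter_congr fun s hs => ?_)
    rw [forall_mem_insert, and_iff_right (not_rookCancels_mk_of_lt
      (snd_lt_of_mem_boardSq_update_zero hright hs))]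
  · congr 1
    ext i
    simp only [freeRows, mem_filter, mem_sdiff, mem_univ, true_and, mem_image, forall_mem_insert,
      rookCancels_mk_mk_iff, not_le]
    constructor
    · rintro ⟨hi, hr₀, h⟩
      exact ⟨⟨hi, fun ⟨r, hr, hri⟩ => h r hr ((rookCancels_mk_iff_of_lt (hcols r hr)).mpr hri)⟩,
        hr₀⟩
    · rintro ⟨⟨hi, h⟩, hr₀⟩
      exact ⟨hi, hr₀, fun r hr hc => h ⟨r, hr, (rookCancels_mk_iff_of_lt (hcols r hr)).mp hc⟩⟩

theorem insert_mem_placements {k : ℕ} {C : Finset (Fin n × Fin n)} {r : Fin n}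
    (hC : C ∈ placements n (Function.update c j 0) k) (hr : r ∈ freeRows (c j) C) :
    insert (r, j) C ∈ placements n c (k + 1) := by
  obtain ⟨rfl, hCB, hna⟩ := mem_placements.mp hC
  rw [boardSq_update_zero] at hCB
  simp only [freeRows, mem_sdiff, mem_filter, mem_univ, true_and, mem_image, not_exists,
    not_and] at hr
  have hcol : ∀ s ∈ C, s.2 ≠ j := fun s hs => (mem_filter.mp (hCB hs)).2
  refine mem_placements.mpr ⟨card_insert_of_notMem fun h => hcol _ h rfl,
    insert_subset (mem_boardSq.mpr hr.1) (hCB.trans (filter_subset _ _)),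
    hna.insert fun s hs => ⟨hr.2 s hs, hcol s hs⟩⟩

theorem erase_mem_placements {k : ℕ} {C : Finset (Fin n × Fin n)} {s : Fin n × Fin n}
    (hC : C ∈ placements n c (k + 1)) (hs : s ∈ C) (hsj : s.2 = j) :
    C.erase s ∈ placements n (Function.update c j 0) k ∧ s.1 ∈ freeRows (c j) (C.erase s) := by
  obtain ⟨hk, hCB, hna⟩ := mem_placements.mp hC
  have hrs : ∀ r ∈ C.erase s, r.1 ≠ s.1 ∧ r.2 ≠ s.2 := fun r hr =>
    hna r (mem_of_mem_erase hr) s hs (ne_of_mem_erase hr)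
  refine ⟨mem_placements.mpr ⟨by rw [card_erase_of_mem hs, hk, Nat.add_sub_cancel], ?_,
    hna.mono (erase_subset _ _)⟩, ?_⟩
  · intro r hr
    rw [boardSq_update_zero, mem_filter, ← hsj]
    exact ⟨hCB (mem_of_mem_erase hr), (hrs r hr).2⟩
  · simp only [freeRows, mem_sdiff, mem_filter, mem_univ, true_and, mem_image, not_exists,
      not_and]
    exact ⟨hsj ▸ mem_boardSq.mp (hCB hs), fun r hr => (hrs r hr).1⟩

theorem eq_and_eq_of_insert_mk_eq {C₁ C₂ : Finset (Fin n × Fin n)} {r₁ r₂ : Fin n}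
    (hC₁ : ∀ s ∈ C₁, s.2 ≠ j) (hC₂ : ∀ s ∈ C₂, s.2 ≠ j)
    (h : insert (r₁, j) C₁ = insert (r₂, j) C₂) : r₁ = r₂ ∧ C₁ = C₂ := by
  have hr : r₁ = r₂ := by
    have hmem := mem_insert_self (r₁, j) C₁
    rw [h, mem_insert] at hmem
    rcases hmem with h' | h'
    · exact (Prod.ext_iff.mp h').1
    · exact absurd rfl (hC₂ _ h')
  subst hr
  have h₁ : (r₁, j) ∉ C₁ := fun h' => hC₁ _ h' rfl
  have h₂ : (r₁, j) ∉ C₂ := fun h' => hC₂ _ h' rfl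
  exact ⟨rfl, by rw [← erase_insert h₁, h, erase_insert h₂]⟩

variable {R : Type*} [CommRing R] (q : R)

theorem sum_placements_forall_snd_ne (hright : ∀ i, j < i → c i = 0)
    (htall : ∀ i, c i ≤ c j) (hcj : c j ≤ n) (k : ℕ) :
    ∑ C ∈ placements n c k with ∀ s ∈ C, s.2 ≠ j, q ^ rookInv n c C =
      q ^ (c j - k) * qRook q n (Function.update c j 0) k := by
  rw [← placements_update_zero, qRook, mul_sum]
  refine sum_congr rfl fun C hC => ?_
  rw [rookInv_of_mem_placements_update_zero hright htall hcj hC, pow_add, mul_comm]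

theorem sum_placements_exists_snd_eq (hright : ∀ i, j < i → c i = 0)
    (htall : ∀ i, c i ≤ c j) (hcj : c j ≤ n) (k : ℕ) :
    ∑ C ∈ placements n c (k + 1) with ∃ s ∈ C, s.2 = j, q ^ rookInv n c C =
      qint q (c j - k) * qRook q n (Function.update c j 0) k := by
  have hcols : ∀ C ∈ placements n (Function.update c j 0) k, ∀ s ∈ C, s.2 ≠ j := fun C hC =>
    (mem_filter.mp ((placements_update_zero c j k) ▸ hC)).2
  calc ∑ C ∈ placements n c (k + 1) with ∃ s ∈ C, s.2 = j, q ^ rookInv n c C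
      = ∑ p ∈ (placements n (Function.update c j 0) k).sigma (freeRows (c j)),
          q ^ rookInv n c (insert (p.2, j) p.1) := by
        symm
        refine sum_bij (fun p _ => insert (p.2, j) p.1) ?_ ?_ ?_ fun _ _ => rfl
        · rintro ⟨C, r⟩ hp
          rw [mem_sigma] at hp
          exact mem_filter.mpr ⟨insert_mem_placements hp.1 hp.2, _, mem_insert_self _ _, rfl⟩
        · rintro ⟨C₁, r₁⟩ hp₁ ⟨C₂, r₂⟩ hp₂ h
          obtain ⟨rfl, rfl⟩ := eq_and_eq_of_insert_mk_eq (hcols _ (mem_sigma.mp hp₁).1)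
            (hcols _ (mem_sigma.mp hp₂).1) h
          rfl
        · intro C hC
          obtain ⟨hCk, s, hs, hsj⟩ := mem_filter.mp hC
          obtain ⟨hC', hs'⟩ := erase_mem_placements hCk hs hsj
          refine ⟨⟨C.erase s, s.1⟩, mem_sigma.mpr ⟨hC', hs'⟩, ?_⟩
          rw [← hsj]
          exact insert_erase hs
    _ = ∑ C ∈ placements n (Function.update c j 0) k,
          qint q (c j - k) * q ^ rookInv n (Function.update c j 0) C := by
        rw [sum_sigma]
        refine sum_congr rfl fun C hC => ?_
        simp_rw [rookInv_insert hright hC, pow_add]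
        rw [← mul_sum, sum_pow_card_filter_lt, card_freeRows hcj (update_zero_le htall) hC,
          mul_comm]
    _ = qint q (c j - k) * qRook q n (Function.update c j 0) k := by
        rw [qRook, mul_sum]

theorem qRook_zero_eq (hright : ∀ i, j < i → c i = 0) (htall : ∀ i, c i ≤ c j) (hcj : c j ≤ n) :
    qRook q n c 0 = q ^ c j * qRook q n (Function.update c j 0) 0 := by
  rw [← Nat.sub_zero (c j), ← sum_placements_forall_snd_ne q hright htall hcj, qRook,
    filter_true_of_mem]
  intro C hC s hs
  rw [card_eq_zero.mp (mem_placements.mp hC).1] at hs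
  exact absurd hs (notMem_empty s)

-- The truncated subtractions are harmless: each multiplies a rook number that vanishes when
-- the subtraction truncates.
theorem qRook_succ_eq (hright : ∀ i, j < i → c i = 0) (htall : ∀ i, c i ≤ c j) (hcj : c j ≤ n)
    (k : ℕ) :
    qRook q n c (k + 1) = q ^ (c j - (k + 1)) * qRook q n (Function.update c j 0) (k + 1) +
      qint q (c j - k) * qRook q n (Function.update c j 0) k := by
  rw [← sum_placements_forall_snd_ne q hright htall hcj,
    ← sum_placements_exists_snd_eq q hright htall hcj, qRook,
    ← sum_filter_add_sum_filter_not _ fun C => ∀ s ∈ C, s.2 ≠ j]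
  simp only [not_forall, not_not, exists_prop]

theorem qRook_succ_eq_zpow {q : ℚ} (hq1 : q ≠ 1) (hright : ∀ i, j < i → c i = 0)
    (htall : ∀ i, c i ≤ c j) (hcj : c j ≤ n) (k : ℕ) :
    qRook q n c (k + 1) =
      q ^ ((c j : ℤ) - (k + 1)) * qRook q n (Function.update c j 0) (k + 1) +
        qbrk q ((c j : ℤ) - k) * qRook q n (Function.update c j 0) k := by
  rw [qRook_succ_eq q hright htall hcj, pow_sub_mul_eq_zpow_sub_mul,
    qint_sub_mul_eq_qbrk_sub_mul hq1, Nat.cast_succ]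
  all_goals exact qRook_eq_zero_of_forall_le q (update_zero_le htall)

end ColumnRemoval

section Factorization

variable {n : ℕ}

-- Boards with fewer columns are kept inside the `n × n` grid, so that `qRook q n` applies to them.
def truncCols (m : ℕ) (c : Fin n → ℕ) : Fin n → ℕ := fun i => if (i : ℕ) < m then c i else 0

theorem truncCols_of_le {m : ℕ} (hm : n ≤ m) (c : Fin n → ℕ) : truncCols m c = c :=
  funext fun i => if_pos (i.isLt.trans_le hm)

theorem update_truncCols_succ {m : ℕ} (hm : m < n) (c : Fin n → ℕ) :
    Function.update (truncCols (m + 1) c) ⟨m, hm⟩ 0 = truncCols m c := by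
  funext i
  rcases eq_or_ne i ⟨m, hm⟩ with rfl | hi
  · simp [truncCols]
  · have : (i : ℕ) ≠ m := fun h => hi (Fin.ext h)
    simp only [Function.update_of_ne hi, truncCols]
    congr 1
    exact propext ⟨fun h => by omega, fun h => by omega⟩

theorem sum_antidiagonal_qDescFactorial_mul_qRook_truncCols {q : ℚ} (hq0 : q ≠ 0)
    (hq1 : q ≠ 1) {c : Fin n → ℕ} (hmono : Monotone c) (hcn : ∀ i, c i ≤ n) (x : ℤ) :
    ∀ m ≤ n, ∑ p ∈ antidiagonal m, qDescFactorial q x p.1 * qRook q n (truncCols m c) p.2 =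
      ∏ i ∈ ({i | (i : ℕ) < m} : Finset (Fin n)), qbrk q (x + c i - i) := by
  intro m
  induction m with
  | zero =>
    intro _
    have htrunc : truncCols 0 c = fun _ => 0 := funext fun _ => if_neg (Nat.not_lt_zero _)
    simp [htrunc, qDescFactorial, qRook_heights_zero]
  | succ m ih =>
    intro hm
    set j : Fin n := ⟨m, hm⟩
    have hcj : truncCols (m + 1) c j = c j := if_pos (Nat.lt_succ_self m)
    have hright : ∀ i, j < i → truncCols (m + 1) c i = 0 := fun i hi =>
      if_neg (by have : m < i := hi; omega)
    have htall : ∀ i, truncCols (m + 1) c i ≤ truncCols (m + 1) c j := fun i => by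
      rw [hcj, truncCols]
      split_ifs with hi
      exacts [hmono (Fin.le_def.mpr (Nat.lt_succ_iff.mp hi)), Nat.zero_le _]
    have hzero := qRook_zero_eq q hright htall (hcj ▸ hcn j)
    have hsucc := qRook_succ_eq_zpow hq1 hright htall (hcj ▸ hcn j)
    rw [update_truncCols_succ hm c] at hzero hsucc
    have hvanish : qRook q n (truncCols m c) (m + 1) = 0 :=
      qRook_eq_zero_of_eq_zero_of_le q (fun i hi => if_neg (by omega)) (Nat.lt_succ_self m)
    have hfilter : ({i | (i : ℕ) < m + 1} : Finset (Fin n)) =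
        insert j ({i | (i : ℕ) < m} : Finset (Fin n)) := by
      ext i
      simp only [mem_filter, mem_univ, true_and, mem_insert, j, Fin.ext_iff]
      omega
    rw [sum_antidiagonal_qDescFactorial_mul_of_recurrence hq0 x _ m _ _ hvanish hzero hsucc,
      ih (by omega), hfilter, prod_insert (by simp [j]), mul_comm, hcj]

end Factorization

theorem statement2 (q : ℚ) (hq0 : q ≠ 0) (hq1 : q ≠ 1) (n : ℕ) (c : Fin n → ℕ)
    (hc : IsFerrers n c) (x : ℕ) :
    ∑ k ∈ Finset.range (n + 1),
        (∏ j ∈ Finset.range k, qbrk q ((x : ℤ) - j)) * qRook q n c (n - k) =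
      ∏ i : Fin n, qbrk q ((x : ℤ) + c i - i) := by
  have h := sum_antidiagonal_qDescFactorial_mul_qRook_truncCols hq0 hq1 hc.1 hc.2 x n le_rfl
  rw [truncCols_of_le le_rfl, filter_true_of_mem fun i _ => i.isLt] at h
  rw [← h]
  exact (Nat.sum_antidiagonal_eq_sum_range_succ
    (fun k l => qDescFactorial q x k * qRook q n c l) n).symm
end

section
/- For any Ferrers board B, Σ_{k≥0} R_k(B;q) (1-q)^k = 1, where R_k(B;q) is the Garsia–Remmel q-rook polynomial. -/
open Finset
open scoped Classical

noncomputable section AuxGR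
open Finset
namespace AuxGR

variable {R : Type*} [CommRing R]
variable {n : ℕ} {c : Fin n → ℕ} {j0 : Fin n}

/-- All non-attacking placements (of any size) on the board. -/
def NAset (n : ℕ) (c : Fin n → ℕ) : Finset (Finset (Fin n × Fin n)) :=
  Finset.univ.filter fun C => C ⊆ boardSq n c ∧ NonAttacking C

lemma na_subset {C C' : Finset (Fin n × Fin n)} (h : C' ⊆ C)
    (hna : NonAttacking C) : NonAttacking C' :=
  fun r hr r' hr' hne => hna r (h hr) r' (h hr') hne

lemma card_le_of_na {C : Finset (Fin n × Fin n)} (h : NonAttacking C) :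
    C.card ≤ n := by
  have hinj : Set.InjOn Prod.snd (C : Set (Fin n × Fin n)) := by
    intro r hr r' hr' he
    by_contra hne
    exact (h r hr r' hr' hne).2 he
  calc C.card = (C.image Prod.snd).card := (Finset.card_image_of_injOn hinj).symm
    _ ≤ Fintype.card (Fin n) := Finset.card_le_univ _
    _ = n := Fintype.card_fin n

lemma sum_eq_NA (q : R) (n : ℕ) (c : Fin n → ℕ) :
    ∑ k ∈ Finset.range (n + 1), qRook q n c k * (1 - q) ^ k =
    ∑ C ∈ NAset n c, (1 - q) ^ C.card * q ^ rookInv n c C := by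
  have hplace : ∀ k, placements n c k = (NAset n c).filter fun C => C.card = k := by
    intro k
    ext C
    simp only [placements, NAset, Finset.mem_filter, Finset.mem_univ, true_and,
      Finset.filter_filter]
    tauto
  calc ∑ k ∈ Finset.range (n + 1), qRook q n c k * (1 - q) ^ k
      = ∑ k ∈ Finset.range (n + 1),
          ∑ C ∈ (NAset n c).filter (fun C => C.card = k),
            (1 - q) ^ C.card * q ^ rookInv n c C := by
        refine Finset.sum_congr rfl fun k _ => ?_
        rw [qRook, ← hplace, Finset.sum_mul]
        refine Finset.sum_congr rfl fun C hC => ?_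
        have hk : C.card = k := by
          simp only [placements, Finset.mem_filter] at hC
          exact hC.2.1
        rw [hk, mul_comm]
    _ = ∑ C ∈ NAset n c, (1 - q) ^ C.card * q ^ rookInv n c C := by
        refine Finset.sum_fiberwise_of_maps_to ?_ _
        intro C hC
        simp only [NAset, Finset.mem_filter, Finset.mem_univ, true_and] at hC
        simp only [Finset.mem_range]
        exact Nat.lt_succ_of_le (card_le_of_na hC.2)

lemma sum_above (q : R) :
    ∀ (m : ℕ) (F : Finset (Fin n)), F.card = m →
      ∑ i ∈ F, q ^ (F.filter fun i' => i < i').card = ∑ t ∈ Finset.range m, q ^ t := by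
  intro m
  induction m with
  | zero =>
    intro F hF
    rw [Finset.card_eq_zero] at hF
    simp [hF]
  | succ m ih =>
    intro F hF
    have hne : F.Nonempty := Finset.card_pos.mp (by omega)
    set i0 := F.min' hne with hi0
    have hmem : i0 ∈ F := F.min'_mem hne
    have hfe : F.filter (fun i' => i0 < i') = F.erase i0 := by
      ext x
      simp only [Finset.mem_filter, Finset.mem_erase]
      constructor
      · exact fun h => ⟨(ne_of_gt h.2), h.1⟩
      · exact fun h => ⟨h.2, lt_of_le_of_ne (F.min'_le x h.2) (Ne.symm h.1)⟩
    have hcard : (F.erase i0).card = m := by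
      rw [Finset.card_erase_of_mem hmem, hF]
      omega
    rw [← Finset.add_sum_erase _ _ hmem, hfe, hcard]
    have h2 : ∀ i ∈ F.erase i0,
        (F.filter fun i' => i < i') = (F.erase i0).filter fun i' => i < i' := by
      intro i hi
      rw [Finset.mem_erase] at hi
      have hi0i : i0 < i := lt_of_le_of_ne (F.min'_le i hi.2) (Ne.symm hi.1)
      ext x
      simp only [Finset.mem_filter, Finset.mem_erase]
      constructor
      · intro h
        exact ⟨⟨(lt_trans hi0i h.2).ne', h.1⟩, h.2⟩
      · exact fun h => ⟨h.1.2, h.2⟩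
    rw [Finset.sum_congr rfl fun i hi => by rw [h2 i hi]]
    rw [ih (F.erase i0) hcard, Finset.sum_range_succ]
    ring

/-- Free rows in column `j0` relative to a placement `C'`. -/
def freeRows (n : ℕ) (c : Fin n → ℕ) (j0 : Fin n) (C' : Finset (Fin n × Fin n)) :
    Finset (Fin n) :=
  Finset.univ.filter fun i => (i : ℕ) < c j0 ∧ ∀ r ∈ C', r.1 ≠ i

lemma mem_board' {s : Fin n × Fin n} :
    s ∈ boardSq n (Function.update c j0 0) ↔ s ∈ boardSq n c ∧ s.2 ≠ j0 := by
  simp only [boardSq, Finset.mem_filter, Finset.mem_univ, true_and]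
  rcases eq_or_ne s.2 j0 with h | h
  · constructor
    · intro hlt
      rw [h, Function.update_self] at hlt
      omega
    · rintro ⟨-, hne⟩
      exact absurd h hne
  · simp [Function.update_of_ne h, h]

lemma col_lt (htop : ∀ j, j0 < j → c j = 0) {C' : Finset (Fin n × Fin n)}
    (hsub : C' ⊆ boardSq n (Function.update c j0 0)) {r : Fin n × Fin n}
    (hr : r ∈ C') : r.2 < j0 := by
  have h := mem_board'.mp (hsub hr)
  have hb : (r.1 : ℕ) < c r.2 := by
    have := h.1
    simpa [boardSq] using this
  rcases lt_or_ge r.2 j0 with h' | h'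
  · exact h'
  · rcases eq_or_lt_of_le h' with h'' | h''
    · exact absurd h''.symm h.2
    · rw [htop _ h''] at hb; omega

/-- The inv-predicate for a placement. -/
def invPred {n : ℕ} (C : Finset (Fin n × Fin n)) (s : Fin n × Fin n) : Prop :=
  s ∉ C ∧ ∀ r ∈ C, ¬(r.2 = s.2 ∧ s.1 < r.1) ∧ ¬(r.1 = s.1 ∧ r.2 < s.2)

lemma rookInv_eq (c : Fin n → ℕ) (C : Finset (Fin n × Fin n)) :
    rookInv n c C = ((boardSq n c).filter (invPred C)).card := by
  unfold rookInv
  congr 1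
  apply Finset.filter_congr
  intro s _
  simp [invPred]

lemma invA (htop : ∀ j, j0 < j → c j = 0) {C' : Finset (Fin n × Fin n)}
    (hsub : C' ⊆ boardSq n (Function.update c j0 0)) :
    rookInv n c C' = rookInv n (Function.update c j0 0) C' +
      (freeRows n c j0 C').card := by
  have hsplit : (boardSq n c).filter (invPred C') =
      ((boardSq n (Function.update c j0 0)).filter (invPred C')) ∪
        ((freeRows n c j0 C').image fun i => (i, j0)) := by
    ext s
    simp only [Finset.mem_filter, Finset.mem_union, Finset.mem_image, mem_board',
      freeRows, Finset.mem_univ, true_and]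
    by_cases hcol : s.2 = j0
    · constructor
      · rintro ⟨hb, hP⟩
        right
        refine ⟨s.1, ⟨?_, ?_⟩, Prod.ext rfl hcol.symm⟩
        · have : (s.1 : ℕ) < c s.2 := by simpa [boardSq] using hb
          rwa [hcol] at this
        · intro r hr he
          exact (hP.2 r hr).2 ⟨he, by rw [hcol]; exact col_lt htop hsub hr⟩
      · rintro (⟨⟨hb, hne⟩, hP⟩ | ⟨i, ⟨hlt, hfree⟩, rfl⟩)
        · exact absurd hcol hne
        · refine ⟨by simpa [boardSq] using hlt, ?_, ?_⟩
          · intro hmem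
            exact absurd (col_lt htop hsub hmem) (lt_irrefl j0)
          · intro r hr
            have hrc : r.2 < j0 := col_lt htop hsub hr
            exact ⟨fun h => absurd h.1 (ne_of_lt hrc), fun h => hfree r hr h.1⟩
    · constructor
      · rintro ⟨hb, hP⟩
        exact Or.inl ⟨⟨hb, hcol⟩, hP⟩
      · rintro (⟨⟨hb, _⟩, hP⟩ | ⟨i, _, rfl⟩)
        · exact ⟨hb, hP⟩
        · exact absurd rfl hcol
  have hdisj : Disjoint ((boardSq n (Function.update c j0 0)).filter (invPred C'))
      ((freeRows n c j0 C').image fun i => (i, j0)) := by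
    rw [Finset.disjoint_right]
    intro s hs hmem
    obtain ⟨i, hi, rfl⟩ := Finset.mem_image.mp hs
    exact (mem_board'.mp (Finset.mem_filter.mp hmem).1).2 rfl
  have hinj : Set.InjOn (fun i : Fin n => (i, j0)) ↑(freeRows n c j0 C') := by
    intro a _ b _ h
    simpa using congrArg Prod.fst h
  rw [rookInv_eq c C', hsplit, Finset.card_union_of_disjoint hdisj,
    Finset.card_image_of_injOn hinj, rookInv_eq]

lemma insert_mem_facts (htop : ∀ j, j0 < j → c j = 0) {C' : Finset (Fin n × Fin n)}
    (hsub : C' ⊆ boardSq n (Function.update c j0 0)) (hna : NonAttacking C')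
    {i : Fin n} (hi : i ∈ freeRows n c j0 C') :
    (i, j0) ∉ C' ∧ insert (i, j0) C' ⊆ boardSq n c ∧
      NonAttacking (insert (i, j0) C') := by
  simp only [freeRows, Finset.mem_filter, Finset.mem_univ, true_and] at hi
  obtain ⟨hlt, hfree⟩ := hi
  have hsub' : C' ⊆ boardSq n c := fun x hx => (mem_board'.mp (hsub hx)).1
  have hnotmem : (i, j0) ∉ C' := fun h => absurd (col_lt htop hsub h) (lt_irrefl j0)
  refine ⟨hnotmem, ?_, ?_⟩
  · intro r hr
    rcases Finset.mem_insert.mp hr with rfl | hr'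
    · simpa [boardSq] using hlt
    · exact hsub' hr'
  · intro r hr r' hr' hne
    rcases Finset.mem_insert.mp hr with rfl | hr1 <;>
      rcases Finset.mem_insert.mp hr' with h2 | hr2
    · exact absurd h2.symm hne
    · exact ⟨fun he => hfree r' hr2 he.symm, (ne_of_gt (col_lt htop hsub hr2))⟩
    · subst h2
      exact ⟨fun he => hfree r hr1 he, ne_of_lt (col_lt htop hsub hr1)⟩
    · exact hna r hr1 r' hr2 hne

lemma invB (htop : ∀ j, j0 < j → c j = 0) {C' : Finset (Fin n × Fin n)}
    (hsub : C' ⊆ boardSq n (Function.update c j0 0)) (hna : NonAttacking C')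
    {i : Fin n} (hi : i ∈ freeRows n c j0 C') :
    rookInv n c (insert (i, j0) C') = rookInv n (Function.update c j0 0) C' +
      ((freeRows n c j0 C').filter fun i' => i < i').card := by
  have hifacts := hi
  simp only [freeRows, Finset.mem_filter, Finset.mem_univ, true_and] at hifacts
  obtain ⟨hlt, hfree⟩ := hifacts
  have hscol : ∀ s : Fin n × Fin n, s ∈ boardSq n (Function.update c j0 0) →
      s.2 < j0 := by
    intro s hs
    have h := mem_board'.mp hs
    have hb : (s.1 : ℕ) < c s.2 := by simpa [boardSq] using h.1
    rcases lt_or_ge s.2 j0 with h' | h'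
    · exact h'
    · rcases eq_or_lt_of_le h' with h'' | h''
      · exact absurd h''.symm h.2
      · rw [htop _ h''] at hb; omega
  have hsplit : (boardSq n c).filter (invPred (insert (i, j0) C')) =
      ((boardSq n (Function.update c j0 0)).filter (invPred C')) ∪
        (((freeRows n c j0 C').filter fun i' => i < i').image fun i' => (i', j0)) := by
    ext s
    simp only [Finset.mem_filter, Finset.mem_union, Finset.mem_image, mem_board',
      freeRows, Finset.mem_univ, true_and]
    by_cases hcol : s.2 = j0
    · constructor
      · rintro ⟨hb, hP⟩
        right
        have hb' : (s.1 : ℕ) < c j0 := by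
          have : (s.1 : ℕ) < c s.2 := by simpa [boardSq] using hb
          rwa [hcol] at this
        have hni : s.1 ≠ i := by
          intro he
          exact hP.1 (Finset.mem_insert.mpr (Or.inl (Prod.ext he hcol)))
        have hnl : ¬ s.1 < i := by
          intro hl
          exact (hP.2 (i, j0) (Finset.mem_insert_self _ _)).1 ⟨hcol.symm, hl⟩
        have hgt : i < s.1 := lt_of_le_of_ne (le_of_not_gt hnl) (Ne.symm hni)
        refine ⟨s.1, ⟨⟨hb', ?_⟩, hgt⟩, Prod.ext rfl hcol.symm⟩
        intro r hr he
        exact (hP.2 r (Finset.mem_insert_of_mem hr)).2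
          ⟨he, by rw [hcol]; exact col_lt htop hsub hr⟩
      · rintro (⟨⟨hb, hne⟩, hP⟩ | ⟨i', ⟨⟨hlt', hfree'⟩, hgt⟩, rfl⟩)
        · exact absurd hcol hne
        · refine ⟨by simpa [boardSq] using hlt', ?_, ?_⟩
          · intro hmem
            rcases Finset.mem_insert.mp hmem with he | hm
            · exact absurd (congrArg Prod.fst he) (ne_of_gt hgt)
            · exact absurd (col_lt htop hsub hm) (lt_irrefl j0)
          · intro r hr
            rcases Finset.mem_insert.mp hr with rfl | hm
            · exact ⟨fun h => absurd h.2 (not_lt_of_gt hgt),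
                fun h => absurd h.2 (lt_irrefl j0)⟩
            · have hrc : r.2 < j0 := col_lt htop hsub hm
              exact ⟨fun h => absurd h.1 (ne_of_lt hrc), fun h => hfree' r hm h.1⟩
    · constructor
      · rintro ⟨hb, hP⟩
        refine Or.inl ⟨⟨hb, hcol⟩, ?_, ?_⟩
        · intro hmem
          exact hP.1 (Finset.mem_insert_of_mem hmem)
        · intro r hr
          exact hP.2 r (Finset.mem_insert_of_mem hr)
      · rintro (⟨⟨hb, hne⟩, hP⟩ | ⟨i', _, rfl⟩)
        · have hslt : s.2 < j0 := hscol s (mem_board'.mpr ⟨hb, hne⟩)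
          refine ⟨hb, ?_, ?_⟩
          · intro hmem
            rcases Finset.mem_insert.mp hmem with he | hm
            · exact hcol (congrArg Prod.snd he)
            · exact hP.1 hm
          · intro r hr
            rcases Finset.mem_insert.mp hr with rfl | hm
            · exact ⟨fun h => hcol h.1.symm, fun h => absurd h.2 (not_lt_of_gt hslt)⟩
            · exact hP.2 r hm
        · exact absurd rfl hcol
  have hdisj : Disjoint ((boardSq n (Function.update c j0 0)).filter (invPred C'))
      (((freeRows n c j0 C').filter fun i' => i < i').image fun i' => (i', j0)) := by
    rw [Finset.disjoint_right]
    intro s hs hmem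
    obtain ⟨i', hi', rfl⟩ := Finset.mem_image.mp hs
    exact (mem_board'.mp (Finset.mem_filter.mp hmem).1).2 rfl
  have hinj : Set.InjOn (fun i' : Fin n => (i', j0))
      ↑((freeRows n c j0 C').filter fun i' => i < i') := by
    intro a _ b _ h
    simpa using congrArg Prod.fst h
  rw [rookInv_eq c, hsplit, Finset.card_union_of_disjoint hdisj,
    Finset.card_image_of_injOn hinj, rookInv_eq]

lemma phi_maps_to (htop : ∀ j, j0 < j → c j = 0) {C : Finset (Fin n × Fin n)}
    (hC : C ∈ NAset n c) :
    C.filter (fun r => ¬ r.2 = j0) ∈ NAset n (Function.update c j0 0) := by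
  simp only [NAset, Finset.mem_filter, Finset.mem_univ, true_and] at hC ⊢
  refine ⟨?_, na_subset (Finset.filter_subset _ _) hC.2⟩
  intro r hr
  rw [Finset.mem_filter] at hr
  exact mem_board'.mpr ⟨hC.1 hr.1, hr.2⟩

lemma fiber_eq (htop : ∀ j, j0 < j → c j = 0) {C' : Finset (Fin n × Fin n)}
    (hC' : C' ∈ NAset n (Function.update c j0 0)) :
    (NAset n c).filter (fun C => C.filter (fun r => ¬ r.2 = j0) = C') =
      insert C' ((freeRows n c j0 C').image fun i => insert (i, j0) C') := by
  have hC'2 := hC'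
  simp only [NAset, Finset.mem_filter, Finset.mem_univ, true_and] at hC'2
  obtain ⟨hsub, hna⟩ := hC'2
  have hC'col : ∀ r ∈ C', r.2 < j0 := fun r hr => col_lt htop hsub hr
  have hC'filter : C'.filter (fun r => ¬ r.2 = j0) = C' := by
    apply Finset.filter_true_of_mem
    intro r hr
    exact ne_of_lt (hC'col r hr)
  have hsub' : C' ⊆ boardSq n c := fun x hx => (mem_board'.mp (hsub hx)).1
  ext C
  simp only [Finset.mem_filter, Finset.mem_univ, true_and, Finset.mem_insert,
    Finset.mem_image, NAset]
  constructor
  · rintro ⟨⟨hCsub, hCna⟩, hphi⟩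
    by_cases hD : ∀ r ∈ C, ¬ r.2 = j0
    · left
      rw [← hphi, Finset.filter_true_of_mem hD]
    · right
      push_neg at hD
      obtain ⟨a, ha, hacol⟩ := hD
      have hCeq : C = insert a C' := by
        rw [← hphi]
        ext x
        simp only [Finset.mem_insert, Finset.mem_filter]
        constructor
        · intro hx
          by_cases hxc : x.2 = j0
          · left
            by_contra hne
            exact ((hCna x hx a ha hne).2 (hxc.trans hacol.symm)).elim
          · right; exact ⟨hx, hxc⟩
        · rintro (rfl | ⟨hx, _⟩)
          · exact ha
          · exact hx
      have haC : a = (a.1, j0) := Prod.ext rfl hacol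
      refine ⟨a.1, ?_, by rw [hCeq, ← haC]⟩
      simp only [freeRows, Finset.mem_filter, Finset.mem_univ, true_and]
      constructor
      · have : (a.1 : ℕ) < c a.2 := by simpa [boardSq] using hCsub ha
        rwa [hacol] at this
      · intro r hr he
        have hrC : r ∈ C := by
          rw [hCeq]; exact Finset.mem_insert_of_mem hr
        have haC' : a ∈ C := ha
        have hne : r ≠ a := by
          intro h
          rw [h] at hr
          exact absurd (hC'col a hr) (hacol ▸ lt_irrefl j0)
        exact (hCna r hrC a haC' hne).1 he
  · rintro (rfl | ⟨i, hi, rfl⟩)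
    · exact ⟨⟨hsub', hna⟩, hC'filter⟩
    · obtain ⟨hnm, hs, hnaI⟩ := insert_mem_facts htop hsub hna hi
      refine ⟨⟨hs, hnaI⟩, ?_⟩
      rw [Finset.filter_insert, if_neg (by simp), hC'filter]

lemma fiber_sum (q : R) (htop : ∀ j, j0 < j → c j = 0)
    {C' : Finset (Fin n × Fin n)}
    (hC' : C' ∈ NAset n (Function.update c j0 0)) :
    ∑ C ∈ (NAset n c).filter (fun C => C.filter (fun r => ¬ r.2 = j0) = C'),
      (1 - q) ^ C.card * q ^ rookInv n c C =
    (1 - q) ^ C'.card * q ^ rookInv n (Function.update c j0 0) C' := by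
  have hmem := hC'
  simp only [NAset, Finset.mem_filter, Finset.mem_univ, true_and] at hmem
  obtain ⟨hsub, hna⟩ := hmem
  set F := freeRows n c j0 C' with hF
  rw [fiber_eq htop hC']
  have hnotim : C' ∉ F.image fun i => insert (i, j0) C' := by
    intro h
    obtain ⟨i, hi, he⟩ := Finset.mem_image.mp h
    have : (i, j0) ∈ C' := he ▸ Finset.mem_insert_self _ _
    exact absurd (col_lt htop hsub this) (lt_irrefl j0)
  rw [Finset.sum_insert hnotim]
  have hinj : ∀ a ∈ F, ∀ b ∈ F, insert (a, j0) C' = insert (b, j0) C' → a = b := by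
    intro a _ b _ h
    have : (a, j0) ∈ insert (b, j0) C' := h ▸ Finset.mem_insert_self _ _
    rcases Finset.mem_insert.mp this with he | hm
    · exact (Prod.ext_iff.mp he).1
    · exact absurd (col_lt htop hsub hm) (lt_irrefl j0)
  rw [Finset.sum_image hinj]
  have hterm : ∀ i ∈ F, (1 - q) ^ (insert (i, j0) C').card *
      q ^ rookInv n c (insert (i, j0) C') =
      (1 - q) ^ (C'.card + 1) * (q ^ rookInv n (Function.update c j0 0) C' *
        q ^ (F.filter fun i' => i < i').card) := by
    intro i hi
    obtain ⟨hnm, -, -⟩ := insert_mem_facts htop hsub hna hi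
    rw [Finset.card_insert_of_notMem hnm, invB htop hsub hna hi, ← hF]
    ring
  rw [Finset.sum_congr rfl hterm, invA htop hsub (C' := C'), pow_add,
    ← Finset.mul_sum, ← Finset.mul_sum, sum_above q F.card F rfl]
  have hgeom : (1 - q) * ∑ t ∈ Finset.range F.card, q ^ t = 1 - q ^ F.card := by
    linear_combination -(geom_sum_mul q F.card)
  calc (1 - q) ^ C'.card * (q ^ rookInv n (Function.update c j0 0) C' * q ^ F.card) +
        (1 - q) ^ (C'.card + 1) *
          (q ^ rookInv n (Function.update c j0 0) C' *
            ∑ t ∈ Finset.range F.card, q ^ t)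
      = (1 - q) ^ C'.card * q ^ rookInv n (Function.update c j0 0) C' *
          (q ^ F.card + (1 - q) * ∑ t ∈ Finset.range F.card, q ^ t) := by ring
    _ = (1 - q) ^ C'.card * q ^ rookInv n (Function.update c j0 0) C' := by
        rw [hgeom]; ring

lemma step (q : R) (htop : ∀ j, j0 < j → c j = 0) :
    ∑ C ∈ NAset n c, (1 - q) ^ C.card * q ^ rookInv n c C =
    ∑ C ∈ NAset n (Function.update c j0 0),
      (1 - q) ^ C.card * q ^ rookInv n (Function.update c j0 0) C := by
  rw [← Finset.sum_fiberwise_of_maps_to (g := fun C => C.filter fun r => ¬ r.2 = j0)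
    (fun C hC => phi_maps_to htop hC)
    (fun C => (1 - q) ^ C.card * q ^ rookInv n c C)]
  exact Finset.sum_congr rfl fun C' hC' => fiber_sum q htop hC'

lemma general (q : R) : ∀ (N : ℕ) (c : Fin n → ℕ), (∑ j, c j) ≤ N →
    ∑ C ∈ NAset n c, (1 - q) ^ C.card * q ^ rookInv n c C = 1 := by
  intro N
  induction N with
  | zero =>
    intro c hc
    have hz : ∀ j, c j = 0 := by
      intro j
      have := Finset.single_le_sum (f := c) (fun i _ => Nat.zero_le _)
        (Finset.mem_univ j)
      omega
    have hb : boardSq n c = ∅ := by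
      ext s
      simp [boardSq, hz]
    have hNA : NAset n c = {∅} := by
      ext C
      simp only [NAset, Finset.mem_filter, Finset.mem_univ, true_and, hb,
        Finset.subset_empty, Finset.mem_singleton]
      constructor
      · exact fun h => h.1
      · rintro rfl
        exact ⟨rfl, fun r hr => absurd hr (Finset.notMem_empty r)⟩
    rw [hNA, Finset.sum_singleton]
    have hri : rookInv n c (∅ : Finset (Fin n × Fin n)) = 0 := by
      rw [rookInv_eq, hb]
      simp
    simp [hri]
  | succ N ih =>
    intro c hc
    by_cases hz : ∀ j, c j = 0
    · have h0 : (∑ j, c j) ≤ N := by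
        have : ∑ j, c j = 0 := Finset.sum_eq_zero fun j _ => hz j
        omega
      exact ih c h0
    · push_neg at hz
      have hTne : (Finset.univ.filter fun j => c j ≠ 0).Nonempty := by
        obtain ⟨j, hj⟩ := hz
        exact ⟨j, by simp [hj]⟩
      set j0 := (Finset.univ.filter fun j => c j ≠ 0).max' hTne with hj0
      have hj0mem := (Finset.univ.filter fun j => c j ≠ 0).max'_mem hTne
      have hj0ne : c j0 ≠ 0 := (Finset.mem_filter.mp hj0mem).2
      have htop : ∀ j, j0 < j → c j = 0 := by
        intro j hj
        by_contra hcj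
        have : j ∈ Finset.univ.filter fun j => c j ≠ 0 := by simp [hcj]
        exact absurd (Finset.le_max' _ j this) (not_le_of_gt hj)
      rw [step q htop]
      apply ih
      have hsum : ∑ j, Function.update c j0 0 j = ∑ j ∈ Finset.univ.erase j0, c j := by
        rw [Finset.sum_update_of_mem (Finset.mem_univ j0), zero_add, ← Finset.erase_eq]
      have hsum2 : c j0 + ∑ j ∈ Finset.univ.erase j0, c j = ∑ j, c j :=
        Finset.add_sum_erase _ c (Finset.mem_univ j0)
      omega

end AuxGR
end AuxGR

theorem statement4 {R : Type*} [CommRing R] (q : R) (n : ℕ) (c : Fin n → ℕ)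
    (hc : IsFerrers n c) :
    ∑ k ∈ Finset.range (n + 1), qRook q n c k * (1 - q) ^ k = 1 := by
  rw [AuxGR.sum_eq_NA]
  exact AuxGR.general q (∑ j, c j) c le_rfl
end

section
/- If f and g are polynomials in q with nonnegative integer coefficients that are symmetric and unimodal with darga(f) = d and darga(g) = e (or zero), then fg is zero or symmetric and unimodal with darga d+e, where darga(Σ_{j=M}^N a_j q^j) := M+N for a_M, a_N ≠ 0. -/
/-- A polynomial with nonnegative integer coefficients is symmetric if its
coefficient sequence reads the same from both ends of its support. -/
def IsSymmPoly (f : Polynomial ℕ) : Prop :=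
  ∀ k ≤ f.natDegree - f.natTrailingDegree,
    f.coeff (f.natTrailingDegree + k) = f.coeff (f.natDegree - k)

/-- A polynomial is unimodal if its coefficients weakly increase then weakly decrease. -/
def IsUnimodalPoly (f : Polynomial ℕ) : Prop :=
  ∃ p : ℕ, (∀ i j, i ≤ j → j ≤ p → f.coeff i ≤ f.coeff j) ∧
    (∀ i j, p ≤ i → i ≤ j → f.coeff j ≤ f.coeff i)

/-- `f` is zero, or symmetric and unimodal with darga (sum of lowest and highest
degrees of the support) equal to `d`. -/
def ZSU (f : Polynomial ℕ) (d : ℕ) : Prop :=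
  f = 0 ∨ (IsSymmPoly f ∧ IsUnimodalPoly f ∧ f.natTrailingDegree + f.natDegree = d)


open Polynomial Finset

/-- Auxiliary predicate: `f` has zero coefficients above `d`, is symmetric about `d/2`,
and its coefficients weakly increase on the lower half. -/
def SUD (f : Polynomial ℕ) (d : ℕ) : Prop :=
  (∀ i, d < i → f.coeff i = 0) ∧
  (∀ i, i ≤ d → f.coeff i = f.coeff (d - i)) ∧
  (∀ i, 2 * (i + 1) ≤ d → f.coeff i ≤ f.coeff (i + 1))

lemma SUD.incr_half {f : Polynomial ℕ} {d : ℕ} (h : SUD f d) :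
    ∀ y x, x ≤ y → 2 * y ≤ d → f.coeff x ≤ f.coeff y := by
  intro y
  induction y with
  | zero => intro x hx _; interval_cases x; exact le_rfl
  | succ n ih =>
    intro x hx hy
    rcases Nat.eq_or_lt_of_le hx with rfl | hlt
    · exact le_rfl
    · exact (ih x (by omega) (by omega)).trans (h.2.2 n (by omega))

lemma SUD.pair {f : Polynomial ℕ} {d : ℕ} (h : SUD f d) {x y : ℕ}
    (hxy : x ≤ y) (hsum : x + y ≤ d) : f.coeff x ≤ f.coeff y := by
  by_cases h2 : 2 * y ≤ d
  · exact h.incr_half y x hxy h2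
  · have hyd : y ≤ d := by omega
    rw [h.2.1 y hyd]
    exact h.incr_half (d - y) x (by omega) (by omega)

lemma SUD.zero (d : ℕ) : SUD 0 d := by
  refine ⟨?_, ?_, ?_⟩ <;> simp

lemma SUD.add {f g : Polynomial ℕ} {d : ℕ} (hf : SUD f d) (hg : SUD g d) :
    SUD (f + g) d := by
  refine ⟨?_, ?_, ?_⟩ <;> intro i hi <;> simp only [coeff_add]
  · rw [hf.1 i hi, hg.1 i hi]
  · rw [hf.2.1 i hi, hg.2.1 i hi]
  · exact Nat.add_le_add (hf.2.2 i hi) (hg.2.2 i hi)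

lemma SUD.Cmul {f : Polynomial ℕ} {d c : ℕ} (hf : SUD f d) : SUD (C c * f) d := by
  refine ⟨?_, ?_, ?_⟩ <;> intro i hi <;> simp only [coeff_C_mul]
  · rw [hf.1 i hi, mul_zero]
  · rw [hf.2.1 i hi]
  · exact Nat.mul_le_mul_left c (hf.2.2 i hi)

lemma SUD.sum {s : Finset ℕ} {F : ℕ → Polynomial ℕ} {d : ℕ}
    (h : ∀ b ∈ s, SUD (F b) d) : SUD (∑ b ∈ s, F b) d :=
  Finset.sum_induction F (fun p => SUD p d) (fun _ _ ha hb => ha.add hb) (SUD.zero d) h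

/-- The atom `q^b + q^{b+1} + ... + q^{e-b}`. -/
noncomputable def atomP (b e : ℕ) : Polynomial ℕ := ∑ i ∈ Icc b (e - b), X ^ i

lemma atomP_coeff (b e n : ℕ) :
    (atomP b e).coeff n = if b ≤ n ∧ n ≤ e - b then 1 else 0 := by
  rw [atomP, finset_sum_coeff]
  simp only [coeff_X_pow]
  rw [Finset.sum_ite_eq (Icc b (e - b)) n (fun _ => 1)]
  simp [Finset.mem_Icc]

lemma coeff_mul_atom (f : Polynomial ℕ) (b e n : ℕ) :
    (f * atomP b e).coeff n =
      ∑ y ∈ Icc b (e - b), (if y ≤ n then f.coeff (n - y) else 0) := by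
  rw [atomP, Finset.mul_sum, finset_sum_coeff]
  exact Finset.sum_congr rfl fun y _ => coeff_mul_X_pow' f y n

lemma SUD.mul_atom {f : Polynomial ℕ} {d b e : ℕ} (hf : SUD f d) (hb : 2 * b ≤ e) :
    SUD (f * atomP b e) (d + e) := by
  refine ⟨?_, ?_, ?_⟩
  · -- vanishing above d + e
    intro n hn
    rw [coeff_mul_atom]
    refine Finset.sum_eq_zero fun y hy => ?_
    rw [Finset.mem_Icc] at hy
    split_ifs with h
    · exact hf.1 (n - y) (by omega)
    · rfl
  · -- symmetry
    intro n hn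
    rw [coeff_mul_atom, coeff_mul_atom]
    refine Finset.sum_nbij' (fun y => e - y) (fun y => e - y) ?_ ?_ ?_ ?_ ?_
    · intro y hy; simp only [Finset.mem_Icc] at hy ⊢; omega
    · intro y hy; simp only [Finset.mem_Icc] at hy ⊢; omega
    · intro y hy; simp only [Finset.mem_Icc] at hy ⊢; omega
    · intro y hy; simp only [Finset.mem_Icc] at hy ⊢; omega
    · intro y hy
      simp only [Finset.mem_Icc] at hy
      by_cases h1 : y ≤ n
      · by_cases h2 : n ≤ d + y
        · rw [if_pos h1, if_pos (by omega)]
          have h3 : n - y ≤ d := by omega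
          have : d + e - n - (e - y) = d - (n - y) := by omega
          rw [this, ← hf.2.1 (n - y) h3]
        · rw [if_pos h1, if_neg (by omega), hf.1 (n - y) (by omega)]
      · rw [if_neg h1, if_pos (by omega), hf.1 (d + e - n - (e - y)) (by omega)]
  · -- increasing step on the lower half
    intro n hn
    rw [coeff_mul_atom, coeff_mul_atom]
    set T : ℕ → ℕ → ℕ := fun m y => if y ≤ m then f.coeff (m - y) else 0 with hT
    show (∑ y ∈ Icc b (e - b), T n y) ≤ ∑ y ∈ Icc b (e - b), T (n + 1) y
    have hbe : b ≤ e - b := by omega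
    have key : (∑ y ∈ Icc b (e - b), T (n + 1) y) + T n (e - b)
        = T (n + 1) b + ∑ y ∈ Icc b (e - b), T n y := by
      have e1 : ∑ y ∈ Icc b (e - b + 1), T (n + 1) y
          = (∑ y ∈ Icc b (e - b), T (n + 1) y) + T (n + 1) (e - b + 1) :=
        Finset.sum_Icc_succ_top (by omega) _
      have e2 : ∑ y ∈ Icc b (e - b + 1), T (n + 1) y
          = T (n + 1) b + ∑ y ∈ Ioc b (e - b + 1), T (n + 1) y := by
        rw [Finset.Icc_eq_cons_Ioc (by omega), Finset.sum_cons]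
      have e3 : ∑ y ∈ Ioc b (e - b + 1), T (n + 1) y
          = ∑ y ∈ Icc b (e - b), T n y := by
        have : Ioc b (e - b + 1) = Icc (b + 1) (e - b + 1) := by
          rw [← Finset.Icc_add_one_left_eq_Ioc]
        rw [this, ← Finset.map_add_right_Icc, Finset.sum_map]
        refine Finset.sum_congr rfl fun y _ => ?_
        simp only [addRightEmbedding_apply, hT, Nat.succ_sub_succ]
        simp only [Nat.add_le_add_iff_right]
      have e4 : T (n + 1) (e - b + 1) = T n (e - b) := by
        simp only [hT, Nat.succ_sub_succ]
        simp only [Nat.add_le_add_iff_right]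
      rw [← e4, ← e1, e2, e3]
    have hTle : T n (e - b) ≤ T (n + 1) b := by
      simp only [hT]
      split_ifs with h1 h2
      · exact hf.pair (by omega) (by omega)
      · omega
      · exact Nat.zero_le _
      · exact le_rfl
    omega

/-- Successive differences of the coefficients of `g`. -/
def dcoeff (g : Polynomial ℕ) : ℕ → ℕ
  | 0 => g.coeff 0
  | (k + 1) => g.coeff (k + 1) - g.coeff k

lemma dcoeff_telescope (g : Polynomial ℕ) (m : ℕ)
    (h : ∀ b < m, g.coeff b ≤ g.coeff (b + 1)) :
    ∑ b ∈ range (m + 1), dcoeff g b = g.coeff m := by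
  induction m with
  | zero => simp [dcoeff]
  | succ k ih =>
    rw [Finset.sum_range_succ, ih (fun b hb => h b (by omega))]
    have := h k (by omega)
    simp only [dcoeff]
    omega

lemma sud_decomposition {g : Polynomial ℕ} {e : ℕ} (hg : SUD g e) :
    g = ∑ b ∈ range (e / 2 + 1), C (dcoeff g b) * atomP b e := by
  ext n
  rw [finset_sum_coeff]
  simp only [coeff_C_mul, atomP_coeff]
  by_cases hne : n ≤ e
  · set m := min n (e - n) with hm
    have hmhalf : m ≤ e / 2 := by omega
    have step1 : ∑ b ∈ range (e / 2 + 1), dcoeff g b * (if b ≤ n ∧ n ≤ e - b then 1 else 0)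
        = ∑ b ∈ range (m + 1), dcoeff g b := by
      rw [← Finset.sum_subset (Finset.range_subset_range.2 (by omega) :
        range (m + 1) ⊆ range (e / 2 + 1))]
      · refine Finset.sum_congr rfl fun b hb => ?_
        rw [Finset.mem_range] at hb
        rw [if_pos (by omega), mul_one]
      · intro b hb hnb
        rw [Finset.mem_range] at hb hnb
        rw [if_neg (by omega), mul_zero]
    rw [step1, dcoeff_telescope g m (fun b hb => hg.2.2 b (by omega))]
    rcases Nat.le_or_le n (e - n) with h1 | h1
    · rw [hm, min_eq_left h1]
    · rw [hm, min_eq_right h1, ← hg.2.1 n hne]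
  · rw [hg.1 n (by omega)]
    refine (Finset.sum_eq_zero fun b hb => ?_).symm
    rw [Finset.mem_range] at hb
    rw [if_neg (by omega), mul_zero]

lemma sud_of_zsu {f : Polynomial ℕ} {d : ℕ} (h : ZSU f d) : f = 0 ∨ SUD f d := by
  rcases h with h | ⟨hsym, ⟨p, hup, hdown⟩, hdeg⟩
  · exact Or.inl h
  right
  by_cases h0 : f = 0
  · exact h0 ▸ SUD.zero d
  have htn : f.natTrailingDegree ≤ f.natDegree := f.natTrailingDegree_le_natDegree
  set t := f.natTrailingDegree with ht
  set N := f.natDegree with hN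
  -- global symmetry
  have gsym : ∀ i ≤ d, f.coeff i = f.coeff (d - i) := by
    intro i hi
    by_cases h1 : i < t
    · rw [coeff_eq_zero_of_lt_natTrailingDegree (by omega),
        coeff_eq_zero_of_natDegree_lt (by omega)]
    · by_cases h2 : i ≤ N
      · have hk : i - t ≤ N - t := by omega
        have := hsym (i - t) hk
        have e1 : t + (i - t) = i := by omega
        have e2 : N - (i - t) = d - i := by omega
        rwa [e1, e2] at this
      · rw [coeff_eq_zero_of_natDegree_lt (by omega),
          coeff_eq_zero_of_lt_natTrailingDegree (by omega)]
  refine ⟨fun i hi => coeff_eq_zero_of_natDegree_lt (by omega), gsym, ?_⟩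
  intro i hi
  by_cases hp : i + 1 ≤ p
  · exact hup i (i + 1) (by omega) hp
  · have hpi : p ≤ i := by omega
    have h1 : f.coeff i = f.coeff (d - i) := gsym i (by omega)
    have h2 : f.coeff (i + 1) = f.coeff (d - (i + 1)) := gsym (i + 1) (by omega)
    rw [h1, h2]
    have : d - (i + 1) + 1 = d - i := by omega
    exact this ▸ hdown (d - (i + 1)) (d - i) (by omega) (by omega)

lemma zsu_of_sud {f : Polynomial ℕ} {d : ℕ} (h : SUD f d) : ZSU f d := by
  by_cases h0 : f = 0
  · exact Or.inl h0
  right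
  have hN : f.natDegree ≤ d := natDegree_le_iff_coeff_eq_zero.2 h.1
  set t := f.natTrailingDegree with ht
  set N := f.natDegree with hNN
  have htn : t ≤ N := f.natTrailingDegree_le_natDegree
  have hlead : f.coeff N ≠ 0 := by
    have := leadingCoeff_ne_zero.2 h0
    rwa [leadingCoeff] at this
  have htrail : f.coeff t ≠ 0 := by
    have := trailingCoeff_nonzero_iff_nonzero.2 h0
    rwa [trailingCoeff] at this
  have hdarga : t + N = d := by
    have h1 : t ≤ d - N := by
      refine natTrailingDegree_le_of_ne_zero ?_
      rw [← h.2.1 N hN]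
      exact hlead
    have h2 : d - t ≤ N := by
      refine le_natDegree_of_ne_zero ?_
      rw [← h.2.1 t (by omega)]
      exact htrail
    omega
  refine ⟨?_, ?_, hdarga⟩
  · intro k hk
    have e1 : t + k ≤ d := by omega
    have := h.2.1 (t + k) e1
    have e2 : d - (t + k) = N - k := by omega
    rwa [e2] at this
  · refine ⟨d / 2, ?_, ?_⟩
    · intro i j hij hj
      exact h.incr_half j i hij (by omega)
    · intro i j hi hij
      rcases Nat.eq_or_lt_of_le hij with rfl | hlt
      · exact le_rfl
      by_cases hjd : j ≤ d
      · rw [h.2.1 j hjd, h.2.1 i (by omega)]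
        exact h.pair (by omega) (by omega)
      · rw [h.1 j (by omega)]
        exact Nat.zero_le _

theorem statement15 (f g : Polynomial ℕ) (d e : ℕ) (hf : ZSU f d) (hg : ZSU g e) :
    ZSU (f * g) (d + e) := by
  rcases sud_of_zsu hf with rfl | hf'
  · exact Or.inl (zero_mul g)
  rcases sud_of_zsu hg with rfl | hg'
  · exact Or.inl (mul_zero f)
  apply zsu_of_sud
  rw [sud_decomposition hg', Finset.mul_sum]
  apply SUD.sum
  intro b hb
  rw [Finset.mem_range] at hb
  have h2b : 2 * b ≤ e := by omega
  have hcomm : f * (C (dcoeff g b) * atomP b e) = C (dcoeff g b) * (f * atomP b e) := by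
    ring
  rw [hcomm]
  exact (hf'.mul_atom h2b).Cmul
end

section
/- ADD-column recurrence for q-hit polynomials: if B = B(c_1,…,c_n) is a Ferrers board and B' = B(0,c_1,…,c_n) is obtained by prepending a column of height zero, then T_{n+1}(B') = 0 and T_k(B') = [n+1-k]_q T_k(B;q) + [k+1]_q q^{n-k} T_{k+1}(B;q) for 0 ≤ k ≤ n+1 (with T_{n+1}(B)=0 and indices outside range interpreted as 0); in particular T_0(B') = [n+1]_q T_0(B) + [1]_q q^n T_1(B). -/
open Finset
open scoped Classical

section Aux
open Finset Polynomial
variable {R : Type*} [CommRing R]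

lemma qint_zero' (q : R) : qint q 0 = 0 := by simp [qint]
lemma qint_one' (q : R) : qint q 1 = 1 := by simp [qint]
lemma qint_succ' (q : R) (m : ℕ) : qint q (m+1) = 1 + q * qint q m := by
  simpa [qint, Finset.mul_sum, pow_succ, mul_comm, add_comm] using geom_sum_succ (x := q) (n := m)

lemma qint_add_pow' (q : R) (m : ℕ) : qint q (m+1) = qint q m + q^m := by
  simp [qint, Finset.sum_range_succ]

lemma coeff_prodXC (s : Finset ℕ) (f : ℕ → R) (k : ℕ) (h : s.card < k) :
    (∏ i ∈ s, (X - C (f i))).coeff k = 0 := by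
  apply Polynomial.coeff_eq_zero_of_natDegree_lt
  calc (∏ i ∈ s, (X - C (f i))).natDegree ≤ ∑ i ∈ s, (X - C (f i)).natDegree :=
        Polynomial.natDegree_prod_le _ _
    _ ≤ s.card := by
        apply le_trans (Finset.sum_le_card_nsmul s _ 1 ?_)
        · simp
        · intro i _; exact Polynomial.natDegree_X_sub_C_le _
    _ < k := h

lemma coeff_XC_mul (a : R) (p : R[X]) (k : ℕ) :
    ((X - C a) * p).coeff (k+1) = p.coeff k - a * p.coeff (k+1) := by
  rw [sub_mul, Polynomial.coeff_sub, Polynomial.coeff_X_mul, Polynomial.coeff_C_mul]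

lemma coeff_XC_mul_zero (a : R) (p : R[X]) :
    ((X - C a) * p).coeff 0 = - (a * p.coeff 0) := by
  rw [sub_mul, Polynomial.coeff_sub, Polynomial.mul_coeff_zero, Polynomial.coeff_C_mul]
  simp

lemma key (q : R) (j : ℕ) : ∀ n, j ≤ n → ∀ k,
    qint q (j+1) * (∏ i ∈ Icc (j+2) (n+1), (X - C (q^i)) : R[X]).coeff k
    = qint q (n+1-k) * (∏ i ∈ Icc (j+1) n, (X - C (q^i)) : R[X]).coeff k
      + qint q (k+1) * q^(n-k) * (∏ i ∈ Icc (j+1) n, (X - C (q^i)) : R[X]).coeff (k+1) := by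
  intro n hn
  induction n, hn using Nat.le_induction with
  | base =>
    intro k
    rw [show Icc (j+2) (j+1) = (∅ : Finset ℕ) from Finset.Icc_eq_empty (by omega),
        show Icc (j+1) j = (∅ : Finset ℕ) from Finset.Icc_eq_empty (by omega)]
    simp only [Finset.prod_empty, Polynomial.coeff_one]
    rcases k with _ | k
    · simp
    · simp
  | succ n hn IH =>
    intro k
    have hins : Icc (j+1) (n+1) = insert (n+1) (Icc (j+1) n) :=
      (Finset.insert_Icc_right_eq_Icc_add_one (by omega)).symm
    have hins' : Icc (j+2) (n+2) = insert (n+2) (Icc (j+2) (n+1)) :=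
      (Finset.insert_Icc_right_eq_Icc_add_one (by omega)).symm
    rw [hins, hins', Finset.prod_insert (by simp), Finset.prod_insert (by simp)]
    set G : R[X] := ∏ i ∈ Icc (j+1) n, (X - C (q^i)) with hG
    set Gh : R[X] := ∏ i ∈ Icc (j+2) (n+1), (X - C (q^i)) with hGh
    have hGz : ∀ m, n - j < m → G.coeff m = 0 := fun m hm => by
      rw [hG]; exact coeff_prodXC _ _ _ (by rw [Nat.card_Icc]; omega)
    have hGhz : ∀ m, n - j < m → Gh.coeff m = 0 := fun m hm => by
      rw [hGh]; exact coeff_prodXC _ _ _ (by rw [Nat.card_Icc]; omega)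
    rcases k with _ | k
    · -- k = 0
      rw [coeff_XC_mul_zero, coeff_XC_mul_zero, show (0+1:ℕ) = 1 from rfl, coeff_XC_mul]
      have h0 := IH 0
      simp only [Nat.sub_zero, Nat.add_sub_cancel] at *
      rw [qint_succ' q (n+1), qint_one'] at *
      linear_combination (-(q^(n+2))) * h0
    · -- k = k'+1 ; target coeff (k+1) and coeff (k+2)
      rw [coeff_XC_mul, coeff_XC_mul, coeff_XC_mul]
      have hk0 := IH k
      have hk1 := IH (k+1)
      rcases lt_trichotomy k n with hkn | hkn | hkn
      · -- k < n
        obtain ⟨d, rfl⟩ : ∃ d, n = k + d + 1 := ⟨n - k - 1, by omega⟩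
        rw [show k + d + 1 + 1 + 1 - (k + 1) = d+1+1 from by omega,
            show k + d + 1 + 1 - (k + 1) = d+1 from by omega] at *
        rw [show k + d + 1 + 1 - k = d+1+1 from by omega,
            show k + d + 1 - k = d+1 from by omega] at hk0
        rw [show k + d + 1 - (k+1) = d from by omega] at hk1
        rw [qint_succ' q (d+1), qint_add_pow' q (k+1)] at *
        linear_combination hk0 - q^(k+d+3) * hk1
      · -- k = n
        subst hkn
        have hz1 : G.coeff (k+1) = 0 := hGz _ (by omega)
        have hz2 : G.coeff (k+1+1) = 0 := hGz _ (by omega)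
        have hz3 : Gh.coeff (k+1) = 0 := hGhz _ (by omega)
        rw [show k + 1 - k = 1 from by omega, show k - k = 0 from by omega] at hk0
        rw [show k + 1 + 1 - (k+1) = 1 from by omega,
            show k + 1 - (k+1) = 0 from by omega, pow_zero]
        rw [qint_one'] at hk0 ⊢
        simp only [hz1, hz2, hz3, mul_zero, zero_mul, sub_zero, add_zero, pow_zero, one_mul] at hk0 ⊢
        linear_combination hk0
      · -- k > n : all coeffs vanish
        have e1 : G.coeff k = 0 := hGz _ (by omega)
        have e2 : G.coeff (k+1) = 0 := hGz _ (by omega)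
        have e3 : G.coeff (k+2) = 0 := hGz _ (by omega)
        have e4 : Gh.coeff k = 0 := hGhz _ (by omega)
        have e5 : Gh.coeff (k+1) = 0 := hGhz _ (by omega)
        rw [show k+1+1 = k+2 from rfl] at *
        rw [e1, e2, e3, e4, e5]
        ring

def emb (n : ℕ) : Fin n × Fin n → Fin (n+1) × Fin (n+1) :=
  fun s => (Fin.castSucc s.1, Fin.succ s.2)

lemma emb_inj (n : ℕ) : Function.Injective (emb n) := by
  intro a b h
  simp only [emb, Prod.ext_iff] at h ⊢
  exact ⟨Fin.castSucc_injective n h.1, Fin.succ_injective n h.2⟩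

lemma board_eq (n : ℕ) (c : Fin n → ℕ) (hc : ∀ j, c j ≤ n) :
    boardSq (n+1) (Fin.cons 0 fun j => c j) = (boardSq n c).image (emb n) := by
  ext s
  simp only [boardSq, Finset.mem_filter, Finset.mem_univ, true_and, Finset.mem_image]
  constructor
  · intro hs
    rcases s with ⟨i, j⟩
    rcases Fin.eq_zero_or_eq_succ j with rfl | ⟨j', rfl⟩
    · simp [Fin.cons_zero] at hs
    · simp only [Fin.cons_succ] at hs
      have hi : (i : ℕ) < n := lt_of_lt_of_le hs (hc j')
      refine ⟨(⟨i, hi⟩, j'), hs, ?_⟩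
      simp [emb, Fin.ext_iff]
  · rintro ⟨⟨i, j⟩, hij, rfl⟩
    simpa [emb, Fin.cons_succ] using hij

lemma na_image {n : ℕ} (C : Finset (Fin n × Fin n)) :
    NonAttacking (C.image (emb n)) ↔ NonAttacking C := by
  constructor
  · intro h r hr r' hr' hne
    have := h _ (Finset.mem_image_of_mem _ hr) _ (Finset.mem_image_of_mem _ hr')
      (fun hh => hne (emb_inj n hh))
    simpa [emb, Fin.ext_iff] using this
  · intro h r hr r' hr' hne
    rcases Finset.mem_image.1 hr with ⟨a, ha, rfl⟩
    rcases Finset.mem_image.1 hr' with ⟨b, hb, rfl⟩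
    have hab : a ≠ b := fun hh => hne (by rw [hh])
    have := h a ha b hb hab
    simpa [emb, Fin.ext_iff] using this

lemma placements_eq (n : ℕ) (c : Fin n → ℕ) (hc : ∀ j, c j ≤ n) (m : ℕ) :
    placements (n+1) (Fin.cons 0 fun j => c j) m
      = (placements n c m).image (fun C => C.image (emb n)) := by
  ext D
  simp only [placements, Finset.mem_filter, Finset.mem_univ, true_and, Finset.mem_image]
  constructor
  · rintro ⟨hcard, hsub, hna⟩
    have hsub' : D ⊆ (boardSq n c).image (emb n) := by rwa [board_eq n c hc] at hsub
    have hrange : ∀ x ∈ D, x ∈ Set.range (emb n) := by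
      intro x hx
      rcases Finset.mem_image.1 (hsub' hx) with ⟨a, _, rfl⟩
      exact ⟨a, rfl⟩
    have himg : (D.preimage (emb n) (emb_inj n).injOn).image (emb n) = D := by
      rw [Finset.image_preimage]
      exact Finset.filter_true_of_mem hrange
    refine ⟨D.preimage (emb n) (emb_inj n).injOn, ⟨?_, ?_, ?_⟩, himg⟩
    · rw [← Finset.card_image_of_injective (D.preimage (emb n) (emb_inj n).injOn) (emb_inj n),
        himg, hcard]
    · intro x hx
      have hx' : emb n x ∈ D := by
        rw [← himg]; exact Finset.mem_image_of_mem _ hx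
      rcases Finset.mem_image.1 (hsub' hx') with ⟨a, ha, hax⟩
      rwa [← emb_inj n hax]
    · exact (na_image _).1 (by rw [himg]; exact hna)
  · rintro ⟨C, ⟨hcard, hsub, hna⟩, rfl⟩
    refine ⟨by rw [Finset.card_image_of_injective _ (emb_inj n), hcard], ?_,
      (na_image C).2 hna⟩
    rw [board_eq n c hc]
    exact Finset.image_subset_image hsub

lemma rookInv_image (n : ℕ) (c : Fin n → ℕ) (hc : ∀ j, c j ≤ n) (C : Finset (Fin n × Fin n)) :
    rookInv (n+1) (Fin.cons 0 fun j => c j) (C.image (emb n)) = rookInv n c C := by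
  unfold rookInv
  rw [board_eq n c hc, Finset.filter_image, Finset.card_image_of_injective _ (emb_inj n)]
  congr 1
  apply Finset.filter_congr
  intro s _
  constructor
  · rintro ⟨h1, h2⟩
    refine ⟨fun hs => h1 (Finset.mem_image_of_mem _ hs), fun r hr => ?_⟩
    have := h2 (emb n r) (Finset.mem_image_of_mem _ hr)
    simpa [emb, Fin.succ_inj, Fin.castSucc_lt_castSucc_iff, Fin.castSucc_inj,
      Fin.succ_lt_succ_iff] using this
  · rintro ⟨h1, h2⟩
    refine ⟨fun hs => ?_, fun r hr => ?_⟩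
    · rcases Finset.mem_image.1 hs with ⟨a, ha, hae⟩
      exact h1 (by rwa [emb_inj n hae] at ha)
    · rcases Finset.mem_image.1 hr with ⟨a, ha, rfl⟩
      have := h2 a ha
      simpa [emb, Fin.succ_inj, Fin.castSucc_lt_castSucc_iff, Fin.castSucc_inj,
        Fin.succ_lt_succ_iff] using this

lemma qRook_cons (q : R) (n : ℕ) (c : Fin n → ℕ) (hc : ∀ j, c j ≤ n) (m : ℕ) :
    qRook q (n+1) (Fin.cons 0 fun j => c j) m = qRook q n c m := by
  unfold qRook
  rw [placements_eq n c hc m,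
    Finset.sum_image (fun C _ C' _ h => Finset.image_injective (emb_inj n) h)]
  exact Finset.sum_congr rfl fun C _ => by rw [rookInv_image n c hc C]

lemma placements_big (n : ℕ) (c : Fin n → ℕ) : placements n c (n+1) = ∅ := by
  ext C
  simp only [placements, Finset.mem_filter, Finset.mem_univ, true_and,
    Finset.notMem_empty, iff_false]
  rintro ⟨hcard, hsub, hna⟩
  have hinj : Set.InjOn Prod.snd (C : Set (Fin n × Fin n)) := by
    intro a ha b hb hab
    by_contra hne
    exact (hna a ha b hb hne).2 hab
  have hle : C.card ≤ (Finset.univ : Finset (Fin n)).card :=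
    Finset.card_le_card_of_injOn Prod.snd (fun a _ => Finset.mem_univ _) hinj
  rw [hcard, Finset.card_univ, Fintype.card_fin] at hle
  omega

lemma qRook_big (q : R) (n : ℕ) (c : Fin n → ℕ) : qRook q n c (n+1) = 0 := by
  unfold qRook
  rw [placements_big]
  simp

lemma qHit_big (q : R) (n : ℕ) (c : Fin n → ℕ) (m : ℕ) (h : n < m) : qHit q n c m = 0 := by
  unfold qHit hitGen
  rw [Polynomial.finset_sum_coeff]
  apply Finset.sum_eq_zero
  intro j hj
  rw [Polynomial.coeff_C_mul, coeff_prodXC _ _ _ (by rw [Nat.card_Icc]; omega), mul_zero]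

lemma master (q : R) (n : ℕ) (c : Fin n → ℕ) (hc : ∀ j, c j ≤ n) (k : ℕ) :
    qHit q (n+1) (Fin.cons 0 fun j => c j) k
      = qint q (n+1-k) * qHit q n c k + qint q (k+1) * q^(n-k) * qHit q n c (k+1) := by
  unfold qHit hitGen
  rw [Polynomial.finset_sum_coeff, Polynomial.finset_sum_coeff, Polynomial.finset_sum_coeff,
    Finset.sum_range_succ' _ (n+1)]
  have h0 : (Polynomial.C (qfact q 0 * qRook q (n+1) (Fin.cons 0 fun j => c j) (n+1-0)) *
      ∏ i ∈ Finset.Icc (0+1) (n+1), (X - C (q^i)) : R[X]).coeff k = 0 := by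
    rw [Nat.sub_zero, qRook_cons q n c hc, qRook_big, mul_zero, Polynomial.C_0, zero_mul,
      Polynomial.coeff_zero]
  rw [h0, add_zero, Finset.mul_sum, Finset.mul_sum, ← Finset.sum_add_distrib]
  apply Finset.sum_congr rfl
  intro j hj
  have hjn : j ≤ n := Nat.lt_succ_iff.mp (Finset.mem_range.1 hj)
  rw [show n + 1 - (j+1) = n - j from by omega, show j+1+1 = j+2 from rfl,
    Polynomial.coeff_C_mul, Polynomial.coeff_C_mul, Polynomial.coeff_C_mul,
    qRook_cons q n c hc,
    show qfact q (j+1) = qfact q j * qint q (j+1) from Finset.prod_range_succ _ _]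
  have hk := key q j n hjn k
  linear_combination (qfact q j * qRook q n c (n - j)) * hk

end Aux


theorem statement17 {R : Type*} [CommRing R] (q : R) (n : ℕ) (c : Fin n → ℕ)
    (hc : IsFerrers n c) :
    qHit q (n + 1) (Fin.cons 0 fun j => c j) (n + 1) = 0 ∧
      ∀ k ≤ n + 1,
        qHit q (n + 1) (Fin.cons 0 fun j => c j) k =
          qint q (n + 1 - k) * qHit q n c k +
            qint q (k + 1) * q ^ (n - k) * qHit q n c (k + 1) := by
  obtain ⟨hmono, hle⟩ := hc
  have h1 := master q n c hle (n+1)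
  rw [show n + 1 - (n+1) = 0 from by omega, qint_zero', zero_mul,
    qHit_big q n c (n+1+1) (by omega), mul_zero, add_zero] at h1
  exact ⟨h1, fun k _ => master q n c hle k⟩
end
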